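/- arXiv:2404.12097 — 2 statements merged into one kernel-verified Lean document; each statement's English description precedes it below -/
import Mathlib

section
/- Let w be a positive integer, let ℓ : ℝ^w → ℝ be twice continuously differentiable, let γ > 0, and let φ : ℝ^w → ℝ^w be a map that is differentiable at a point ω₀ and satisfies the stationarity identity ∇ℓ(φ(ω)) + γ(φ(ω) − ω) = 0 for every ω ∈ ℝ^w. If the linear operator Q := Id + γ⁻¹ H, where H is the Hessian of ℓ at φ(ω₀) (i.e., the derivative of the gradient map ∇ℓ at φ(ω₀)), is invertible, then the (Fréchet) derivative of φ at ω₀ equals Q⁻¹. -/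
open scoped RealInnerProductSpace

/-- Implicit-function-theorem gradient identity of iMAML:
if `φ ω` is a stationary point of `ψ ↦ ℓ ψ + (γ/2)‖ψ − ω‖²` for every `ω`
(i.e. `∇ℓ(φ ω) + γ (φ ω − ω) = 0`), `φ` is differentiable at `ω₀`, and
`Q = Id + γ⁻¹ H` (with `H` the Hessian of `ℓ` at `φ ω₀`, i.e. the derivative
of the gradient map) is invertible, then `dφ/dω (ω₀) = Q⁻¹`. -/
theorem imaml_inner_solution_derivative
    (w : ℕ) (hw : 0 < w)
    (ℓ : EuclideanSpace ℝ (Fin w) → ℝ) (hℓ : ContDiff ℝ 2 ℓ)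
    (γ : ℝ) (hγ : 0 < γ)
    (φ : EuclideanSpace ℝ (Fin w) → EuclideanSpace ℝ (Fin w))
    (ω₀ : EuclideanSpace ℝ (Fin w))
    (hφ : DifferentiableAt ℝ φ ω₀)
    (hstat : ∀ ω : EuclideanSpace ℝ (Fin w),
      gradient ℓ (φ ω) + γ • (φ ω - ω) = 0)
    (Q : EuclideanSpace ℝ (Fin w) →L[ℝ] EuclideanSpace ℝ (Fin w))
    (hQ : Q = ContinuousLinearMap.id ℝ (EuclideanSpace ℝ (Fin w))
        + γ⁻¹ • fderiv ℝ (gradient ℓ) (φ ω₀))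
    (hQinv : IsUnit Q) :
    fderiv ℝ φ ω₀ = Ring.inverse Q := by
  have hgrad : ContDiff ℝ 1 (gradient ℓ) := by
    have h1 : ContDiff ℝ 1 (fderiv ℝ ℓ) := hℓ.fderiv_right (le_refl _)
    have h2 : gradient ℓ = fun x =>
        (InnerProductSpace.toDual ℝ (EuclideanSpace ℝ (Fin w))).symm (fderiv ℝ ℓ x) := rfl
    rw [h2]
    exact (InnerProductSpace.toDual ℝ (EuclideanSpace ℝ (Fin w))).symm.contDiff.comp h1
  have hgd : DifferentiableAt ℝ (gradient ℓ) (φ ω₀) :=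
    (hgrad.differentiable one_ne_zero) (φ ω₀)
  set D := fderiv ℝ φ ω₀ with hD
  set H := fderiv ℝ (gradient ℓ) (φ ω₀) with hH
  have heq : (fun ω => gradient ℓ (φ ω)) = fun ω => γ • (ω - φ ω) := by
    funext ω
    have h := hstat ω
    have h' : gradient ℓ (φ ω) = -(γ • (φ ω - ω)) := by
      rw [eq_neg_iff_add_eq_zero]; exact h
    rw [h', smul_sub, smul_sub]; abel
  have hcomp : fderiv ℝ (fun ω => gradient ℓ (φ ω)) ω₀ = H.comp D :=
    fderiv_comp ω₀ hgd hφ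
  have hrhs : fderiv ℝ (fun ω : EuclideanSpace ℝ (Fin w) => γ • (ω - φ ω)) ω₀
      = γ • (ContinuousLinearMap.id ℝ (EuclideanSpace ℝ (Fin w)) - D) := by
    have h1 : DifferentiableAt ℝ (fun ω : EuclideanSpace ℝ (Fin w) => ω - φ ω) ω₀ :=
      differentiableAt_id.sub hφ
    rw [fderiv_fun_const_smul h1]
    congr 1
    have := fderiv_fun_sub (𝕜 := ℝ) (x := ω₀)
      (f := fun ω : EuclideanSpace ℝ (Fin w) => ω) (g := φ) differentiableAt_id hφ
    rw [this, fderiv_id']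
  have key : H.comp D = γ • (ContinuousLinearMap.id ℝ (EuclideanSpace ℝ (Fin w)) - D) := by
    rw [← hcomp, heq, hrhs]
  have hQD : Q * D = 1 := by
    have hmul : Q * D = D + γ⁻¹ • (H.comp D) := by
      rw [hQ]; ext x; simp [ContinuousLinearMap.mul_apply]
    rw [hmul, key, smul_smul, inv_mul_cancel₀ hγ.ne', one_smul]
    ext x; simp
  calc D = Ring.inverse Q * (Q * D) := by
        rw [← mul_assoc, Ring.inverse_mul_cancel _ hQinv, one_mul]
    _ = Ring.inverse Q := by rw [hQD, mul_one]
end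

section
/- Let w be a positive integer, let ℓ : ℝ^w → ℝ be twice continuously differentiable, let γ > 0, and let φ : ℝ^w → ℝ^w be differentiable at ω₀ with ∇ℓ(φ(ω)) + γ(φ(ω) − ω) = 0 for every ω. Let g : ℝ^w → ℝ be differentiable at φ(ω₀). Assume the operator Q := Id + γ⁻¹ H is invertible and self-adjoint, where H is the Hessian of ℓ at φ(ω₀). Then the gradient of the composite function ω ↦ g(φ(ω)) at ω₀ equals Q⁻¹ applied to ∇g(φ(ω₀)). -/
open scoped RealInnerProductSpace

/-- Outer-loop meta-gradient formula of iMAML: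
under the stationarity identity `∇ℓ(φ ω) + γ (φ ω − ω) = 0`, with `φ`
differentiable at `ω₀`, `g` differentiable at `φ ω₀`, and
`Q = Id + γ⁻¹ H` (Hessian `H` of `ℓ` at `φ ω₀`) invertible and self-adjoint,
the gradient of `ω ↦ g (φ ω)` at `ω₀` is `Q⁻¹ ∇g(φ ω₀)`. -/
theorem imaml_meta_gradient
    (w : ℕ) (hw : 0 < w)
    (ℓ : EuclideanSpace ℝ (Fin w) → ℝ) (hℓ : ContDiff ℝ 2 ℓ)
    (γ : ℝ) (hγ : 0 < γ)
    (φ : EuclideanSpace ℝ (Fin w) → EuclideanSpace ℝ (Fin w))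
    (ω₀ : EuclideanSpace ℝ (Fin w))
    (hφ : DifferentiableAt ℝ φ ω₀)
    (hstat : ∀ ω : EuclideanSpace ℝ (Fin w),
      gradient ℓ (φ ω) + γ • (φ ω - ω) = 0)
    (g : EuclideanSpace ℝ (Fin w) → ℝ)
    (hg : DifferentiableAt ℝ g (φ ω₀))
    (Q : EuclideanSpace ℝ (Fin w) →L[ℝ] EuclideanSpace ℝ (Fin w))
    (hQ : Q = ContinuousLinearMap.id ℝ (EuclideanSpace ℝ (Fin w))
        + γ⁻¹ • fderiv ℝ (gradient ℓ) (φ ω₀))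
    (hQinv : IsUnit Q)
    (hQsa : ∀ x y : EuclideanSpace ℝ (Fin w), ⟪Q x, y⟫ = ⟪x, Q y⟫) :
    gradient (fun ω => g (φ ω)) ω₀ = Ring.inverse Q (gradient g (φ ω₀)) := by
  set D : EuclideanSpace ℝ (Fin w) →L[ℝ] EuclideanSpace ℝ (Fin w) := fderiv ℝ φ ω₀ with hD
  set H : EuclideanSpace ℝ (Fin w) →L[ℝ] EuclideanSpace ℝ (Fin w) := fderiv ℝ (gradient ℓ) (φ ω₀) with hH
  -- gradient ℓ is C¹
  have hgradC1 : ContDiff ℝ 1 (gradient ℓ) := by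
    have h1 : ContDiff ℝ 1 (fderiv ℝ ℓ) := hℓ.fderiv_right (by norm_num)
    have := ((InnerProductSpace.toDual ℝ (EuclideanSpace ℝ (Fin w))).symm.contDiff).comp h1
    exact this
  have hgraddiff : DifferentiableAt ℝ (gradient ℓ) (φ ω₀) :=
    (hgradC1.differentiable one_ne_zero).differentiableAt
  -- differentiate the stationarity identity
  have hF1 : HasFDerivAt (fun ω => gradient ℓ (φ ω)) (H.comp D) ω₀ :=
    (hgraddiff.hasFDerivAt).comp ω₀ hφ.hasFDerivAt
  have hF2 : HasFDerivAt (fun ω : EuclideanSpace ℝ (Fin w) => γ • (φ ω - ω))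
      (γ • (D - ContinuousLinearMap.id ℝ (EuclideanSpace ℝ (Fin w)))) ω₀ :=
    ((hφ.hasFDerivAt.sub (hasFDerivAt_id ω₀))).const_smul γ
  have hFsum : HasFDerivAt (fun ω : EuclideanSpace ℝ (Fin w) => gradient ℓ (φ ω) + γ • (φ ω - ω))
      (H.comp D + γ • (D - ContinuousLinearMap.id ℝ (EuclideanSpace ℝ (Fin w)))) ω₀ := hF1.add hF2
  have hzero : HasFDerivAt (fun ω : EuclideanSpace ℝ (Fin w) => gradient ℓ (φ ω) + γ • (φ ω - ω))
      (0 : EuclideanSpace ℝ (Fin w) →L[ℝ] EuclideanSpace ℝ (Fin w)) ω₀ := by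
    have : (fun ω : EuclideanSpace ℝ (Fin w) => gradient ℓ (φ ω) + γ • (φ ω - ω)) = fun _ => (0 : EuclideanSpace ℝ (Fin w)) :=
      funext hstat
    rw [this]
    exact hasFDerivAt_const 0 ω₀
  have heq : H.comp D + γ • (D - ContinuousLinearMap.id ℝ (EuclideanSpace ℝ (Fin w))) = 0 :=
    hFsum.unique hzero
  -- Q ∘ D = id
  have hQD : Q * D = 1 := by
    have hγ' : γ ≠ 0 := ne_of_gt hγ
    have h1 : H.comp D = γ • (ContinuousLinearMap.id ℝ (EuclideanSpace ℝ (Fin w)) - D) := by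
      have h2 := heq
      rw [add_eq_zero_iff_eq_neg] at h2
      rw [h2]
      rw [show ContinuousLinearMap.id ℝ (EuclideanSpace ℝ (Fin w)) - D =
        -(D - ContinuousLinearMap.id ℝ (EuclideanSpace ℝ (Fin w))) from (neg_sub _ _).symm,
        smul_neg]
    show Q.comp D = ContinuousLinearMap.id ℝ (EuclideanSpace ℝ (Fin w))
    rw [hQ, ContinuousLinearMap.add_comp, ContinuousLinearMap.smul_comp,
      ContinuousLinearMap.id_comp, h1, smul_smul, inv_mul_cancel₀ hγ', one_smul]
    abel
  obtain ⟨u, hu⟩ := hQinv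
  have hDu : D = ↑u⁻¹ := by
    have : (↑u⁻¹ : EuclideanSpace ℝ (Fin w) →L[ℝ] EuclideanSpace ℝ (Fin w)) * (Q * D) = ↑u⁻¹ * 1 := by rw [hQD]
    rwa [← hu, ← mul_assoc, Units.inv_mul, one_mul, mul_one] at this
  have hRinv : Ring.inverse Q = D := by
    rw [← hu, Ring.inverse_unit, ← hDu]
  -- Q (D x) = x
  have hQDx : ∀ x : EuclideanSpace ℝ (Fin w), Q (D x) = x := fun x => by
    have := congrFun (congrArg DFunLike.coe hQD) x
    simpa using this
  -- D is self-adjoint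
  have hDsa : ∀ x y : EuclideanSpace ℝ (Fin w), ⟪D x, y⟫ = ⟪x, D y⟫ := by
    intro x y
    calc ⟪D x, y⟫ = ⟪D x, Q (D y)⟫ := by rw [hQDx]
      _ = ⟪Q (D x), D y⟫ := (hQsa _ _).symm
      _ = ⟪x, D y⟫ := by rw [hQDx]
  -- gradient/fderiv pairing
  have hpair : ∀ (f : EuclideanSpace ℝ (Fin w) → ℝ) (x y : EuclideanSpace ℝ (Fin w)), ⟪gradient f x, y⟫ = fderiv ℝ f x y := by
    intro f x y
    rw [gradient]
    exact InnerProductSpace.toDual_symm_apply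
  -- chain rule for fderiv
  have hchain : fderiv ℝ (fun ω => g (φ ω)) ω₀ = (fderiv ℝ g (φ ω₀)).comp D :=
    fderiv_comp ω₀ hg hφ
  rw [hRinv]
  apply ext_inner_right ℝ
  intro y
  rw [hpair, hchain]
  calc (fderiv ℝ g (φ ω₀)).comp D y = fderiv ℝ g (φ ω₀) (D y) := rfl
    _ = ⟪gradient g (φ ω₀), D y⟫ := (hpair g (φ ω₀) (D y)).symm
    _ = ⟪D (gradient g (φ ω₀)), y⟫ := (hDsa _ _).symm
end
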